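/- arXiv:1201.3656 — 2 statements merged into one kernel-verified Lean document; each statement's English description precedes it below -/
import Mathlib

section
/- Let P = B[x_1] ∩ … ∩ B[x_f] (f ≥ 2) be an intersection of closed unit balls in E³ with nonempty interior and pairwise distinct centers. Then each face F_k = S(x_k) ∩ bd(P) is a spherically convex subset of S(x_k): for any y_1, y_2 ∈ F_k and any reals s, t ≥ 0 with w := s(y_1 − x_k) + t(y_2 − x_k) ≠ 0, the point x_k + w/‖w‖ belongs to F_k. -/
open Set Metric MeasureTheory
open scoped RealInnerProductSpace

noncomputable section

/-- Euclidean 3-space. -/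
abbrev E3 : Type := EuclideanSpace ℝ (Fin 3)

/-- The intersection of the closed unit balls centered at the points `x k`. -/
def bpoly {f : ℕ} (x : Fin f → E3) : Set E3 := ⋂ k, closedBall (x k) 1

/-- The family of unit balls centered at the `x k` is reduced: removing any one ball
yields a strictly larger intersection. -/
def Reduced {f : ℕ} (x : Fin f → E3) : Prop :=
  ∀ k : Fin f, ¬ (⋂ j ∈ {j : Fin f | j ≠ k}, closedBall (x j) 1) ⊆ closedBall (x k) 1

/-- `x` generates a ball-polyhedron: the intersection of the unit balls centered at the `x k`
has nonempty interior and the family is reduced. -/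
def IsBallPolyhedron {f : ℕ} (x : Fin f → E3) : Prop :=
  (interior (bpoly x)).Nonempty ∧ Reduced x

/-- The face of the ball-polyhedron generated by `x` corresponding to the `k`-th ball. -/
def face {f : ℕ} (x : Fin f → E3) (k : Fin f) : Set E3 :=
  sphere (x k) 1 ∩ frontier (bpoly x)

/-- A vertex of the ball-polyhedron: a boundary point lying on at least three
generating unit spheres. -/
def IsVertex {f : ℕ} (x : Fin f → E3) (p : E3) : Prop :=
  p ∈ frontier (bpoly x) ∧ 3 ≤ {k : Fin f | p ∈ sphere (x k) 1}.ncard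

/-- An edge of the ball-polyhedron: a nondegenerate (more than one point) connected
component of the intersection of two faces. -/
def IsEdge {f : ℕ} (x : Fin f → E3) (e : Set E3) : Prop :=
  ∃ i k : Fin f, i ≠ k ∧ (∃ p ∈ e, e = connectedComponentIn (face x i ∩ face x k) p) ∧
    ∃ a ∈ e, ∃ b ∈ e, a ≠ b

/-- The elements of the vertex-edge-face structure of the ball-polyhedron generated by `x`
(including `∅` and the whole body), as a family of subsets of `E3` ordered by inclusion. -/
def latticeElems {f : ℕ} (x : Fin f → E3) : Set (Set E3) :=
  {s | s = ∅ ∨ s = bpoly x ∨ (∃ p, IsVertex x p ∧ s = {p}) ∨ IsEdge x s ∨ ∃ k, s = face x k}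

/-- A family of sets, partially ordered by inclusion, forms a lattice: any two members have a
least upper bound and a greatest lower bound within the family. -/
def IsLatticeFamily (L : Set (Set E3)) : Prop :=
  ∀ A ∈ L, ∀ B ∈ L,
    (∃ S ∈ L, A ⊆ S ∧ B ⊆ S ∧ ∀ T ∈ L, A ⊆ T → B ⊆ T → S ⊆ T) ∧
    (∃ S ∈ L, S ⊆ A ∧ S ⊆ B ∧ ∀ T ∈ L, T ⊆ A → T ⊆ B → T ⊆ S)

/-- A standard ball-polyhedron: a ball-polyhedron whose vertex-edge-face structure is a
lattice with respect to containment. -/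
def IsStandard {f : ℕ} (x : Fin f → E3) : Prop :=
  IsBallPolyhedron x ∧ IsLatticeFamily (latticeElems x)

/-- A combinatorial equivalence between two ball-polyhedra: an inclusion-preserving
bijection between their face lattices. -/
structure CombEquiv {f f' : ℕ} (x : Fin f → E3) (x' : Fin f' → E3) where
  toFun : Set E3 → Set E3
  invFun : Set E3 → Set E3
  mapsTo : ∀ s ∈ latticeElems x, toFun s ∈ latticeElems x'
  mapsTo' : ∀ s ∈ latticeElems x', invFun s ∈ latticeElems x
  left_inv : ∀ s ∈ latticeElems x, invFun (toFun s) = s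
  right_inv : ∀ s ∈ latticeElems x', toFun (invFun s) = s
  incl : ∀ s ∈ latticeElems x, ∀ t ∈ latticeElems x, (s ⊆ t ↔ toFun s ⊆ toFun t)

/-- The inner dihedral angle at a point `p` of an edge lying on the faces coming from the
unit balls centered at `xi` and `xk`: it is `π` minus the angle between `p - xi` and `p - xk`. -/
def dihedralAngleAt (xi xk p : E3) : ℝ :=
  Real.pi - InnerProductGeometry.angle (p - xi) (p - xk)

/-- Under the combinatorial equivalence `φ`, corresponding edges of the two ball-polyhedra
carry equal inner dihedral angles. -/
def EqualDihedralAngles {f f' : ℕ} (x : Fin f → E3) (x' : Fin f' → E3)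
    (φ : CombEquiv x x') : Prop :=
  ∀ e, IsEdge x e →
    ∀ i k : Fin f, i ≠ k → e ⊆ face x i → e ⊆ face x k →
    ∀ i' k' : Fin f', i' ≠ k' → φ.toFun e ⊆ face x' i' → φ.toFun e ⊆ face x' k' →
    ∀ p ∈ e, ∀ p' ∈ φ.toFun e,
      dihedralAngleAt (x i) (x k) p = dihedralAngleAt (x' i') (x' k') p'

/-- Under the combinatorial equivalence `φ`, corresponding edges of the two ball-polyhedra
have equal arc length (one-dimensional Hausdorff measure). -/
def EqualEdgeLengths {f f' : ℕ} (x : Fin f → E3) (x' : Fin f' → E3)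
    (φ : CombEquiv x x') : Prop :=
  ∀ e, IsEdge x e → μH[1] e = μH[1] (φ.toFun e)

/-- `u` is the direction of the tangent half-line of the arc `e` at its point `v`:
`u` is a unit vector and the normalized secant directions of `e` at `v` converge to `u`. -/
def IsTangentDirAt (e : Set E3) (v u : E3) : Prop :=
  ‖u‖ = 1 ∧ v ∈ closure (e \ {v}) ∧
    ∀ ε > 0, ∃ δ > 0, ∀ w ∈ e, w ≠ v → ‖w - v‖ < δ →
      ‖(‖w - v‖⁻¹ • (w - v)) - u‖ < ε

/-- Under the combinatorial equivalence `φ`, at corresponding vertices of corresponding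
faces, the face angles (angles between the tangent half-lines of the two edges of the face
meeting at the vertex) are equal. -/
def EqualFaceAngles {f f' : ℕ} (x : Fin f → E3) (x' : Fin f' → E3)
    (φ : CombEquiv x x') : Prop :=
  ∀ v v' : E3, IsVertex x v → φ.toFun {v} = {v'} →
  ∀ k : Fin f, ∀ k' : Fin f', φ.toFun (face x k) = face x' k' →
  ∀ e₁ e₂, IsEdge x e₁ → IsEdge x e₂ → e₁ ≠ e₂ →
    v ∈ e₁ → v ∈ e₂ → e₁ ⊆ face x k → e₂ ⊆ face x k →
  ∀ u₁ u₂ u₁' u₂' : E3, IsTangentDirAt e₁ v u₁ → IsTangentDirAt e₂ v u₂ →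
    IsTangentDirAt (φ.toFun e₁) v' u₁' → IsTangentDirAt (φ.toFun e₂) v' u₂' →
    InnerProductGeometry.angle u₁ u₂ = InnerProductGeometry.angle u₁' u₂'

/-- Two subsets of `E3` are congruent if an isometry of `E3` maps one onto the other. -/
def CongruentSets (A B : Set E3) : Prop := ∃ T : E3 ≃ᵢ E3, T '' A = B

/-- The farthest-point Voronoi cell of the point `c i`. -/
def vorCell {n : ℕ} (c : Fin n → E3) (i : Fin n) : Set E3 :=
  {p : E3 | ∀ j, dist p (c j) ≤ dist p (c i)}

/-- `F` is a `d`-dimensional face of the closed convex set `C`: a nonempty closed convex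
extreme subset of `C` whose affine span has dimension `d`. -/
def IsFaceOfDim (C F : Set E3) (d : ℕ) : Prop :=
  F.Nonempty ∧ IsExtreme ℝ C F ∧ Convex ℝ F ∧ IsClosed F ∧
    Module.finrank ℝ (vectorSpan ℝ F) = d

/-- `p` is a vertex of the farthest-point Voronoi tiling of `c`:
a `0`-dimensional face of one of the cells. -/
def IsVorVertex {n : ℕ} (c : Fin n → E3) (p : E3) : Prop :=
  ∃ i, IsFaceOfDim (vorCell c i) {p} 0

/-- `e` is an edge of the farthest-point Voronoi tiling of `c`:
a `1`-dimensional face of one of the cells. -/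
def IsVorEdge {n : ℕ} (c : Fin n → E3) (e : Set E3) : Prop :=
  ∃ i, IsFaceOfDim (vorCell c i) e 1

/-- `F` is a face of the farthest-point Voronoi tiling of `c`:
a `2`-dimensional face of one of the cells. -/
def IsVorFace {n : ℕ} (c : Fin n → E3) (F : Set E3) : Prop :=
  ∃ i, IsFaceOfDim (vorCell c i) F 2

/-- The index set `I` spans a member `conv {c i : i ∈ I}` of the farthest-point Delaunay
complex of `c`: some point `p` has all points of `I` at the same distance `ρ` and
all other points strictly closer. -/
def DelaunayIndex {n : ℕ} (c : Fin n → E3) (I : Set (Fin n)) : Prop :=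
  ∃ p : E3, ∃ ρ : ℝ, 0 < ρ ∧ (∀ i ∈ I, dist p (c i) = ρ) ∧ ∀ j ∉ I, dist p (c j) < ρ

/-- A normal ball-polyhedron: a ball-polyhedron whose centers affinely span `E3` and such
that every vertex of the farthest-point Voronoi tiling of the centers lies in the interior
of the ball-polyhedron. -/
def IsNormal {f : ℕ} (x : Fin f → E3) : Prop :=
  IsBallPolyhedron x ∧ affineSpan ℝ (Set.range x) = ⊤ ∧
    ∀ p : E3, IsVorVertex x p → p ∈ interior (bpoly x)

/-- A cyclic sequence of reals has at least four sign changes (ignoring zeros):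
there are four cyclically ordered positions with alternating strict signs. -/
def AtLeastFourSignChanges {n : ℕ} (a : Fin n → ℝ) : Prop :=
  ∃ j₁ j₂ j₃ j₄ : Fin n, j₁ < j₂ ∧ j₂ < j₃ ∧ j₃ < j₄ ∧
    ((0 < a j₁ ∧ a j₂ < 0 ∧ 0 < a j₃ ∧ a j₄ < 0) ∨
     (a j₁ < 0 ∧ 0 < a j₂ ∧ a j₃ < 0 ∧ 0 < a j₄))

/-- The face angle of the ball-polyhedron generated by `x` at the vertex `v` of the face
`face x k`: the angle between the tangent half-lines at `v` of the two edges of that face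
meeting at `v`. -/
noncomputable def faceAngle {f : ℕ} (x : Fin f → E3) (k : Fin f) (v : E3) : ℝ :=
  Classical.epsilon fun θ : ℝ =>
    ∃ e₁ e₂ u₁ u₂, IsEdge x e₁ ∧ IsEdge x e₂ ∧ e₁ ≠ e₂ ∧
      v ∈ e₁ ∧ v ∈ e₂ ∧ e₁ ⊆ face x k ∧ e₂ ⊆ face x k ∧
      IsTangentDirAt e₁ v u₁ ∧ IsTangentDirAt e₂ v u₂ ∧
      θ = InnerProductGeometry.angle u₁ u₂

/-!
For a point `p` of the unit sphere `S(c)`, the condition `p ∈ B[q]` reads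
`‖q - c‖² ≤ 2 ⟪p - c, q - c⟫`. Up to the factor `‖p - c‖ = 1` this is a homogeneous convex
condition on the direction `p - c`, so it survives nonnegative combinations of directions followed
by normalization: every cap `S(c) ∩ B[q]`, hence `S(c) ∩ P`, is spherically convex. Finally
`int P ⊆ int B[x_k]` is disjoint from `S(x_k)`, so `S(x_k) ∩ bd P = S(x_k) ∩ P`.
-/

section InnerProductSpace

variable {E : Type*} [NormedAddCommGroup E] [InnerProductSpace ℝ E]

theorem norm_sub_le_one_iff_of_norm_eq_one {u v : E} (hu : ‖u‖ = 1) :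
    ‖u - v‖ ≤ 1 ↔ ‖v‖ ^ 2 ≤ 2 * ⟪u, v⟫ := by
  rw [← sq_le_one_iff₀ (norm_nonneg _), norm_sub_sq_real, hu]
  constructor <;> intro h <;> linarith

theorem mem_closedBall_iff_of_mem_sphere {c p q : E} (hp : p ∈ sphere c 1) :
    p ∈ closedBall q 1 ↔ ‖q - c‖ ^ 2 ≤ 2 * ⟪p - c, q - c⟫ := by
  rw [← norm_sub_le_one_iff_of_norm_eq_one (mem_sphere_iff_norm.mp hp),
    sub_sub_sub_cancel_right, mem_closedBall, dist_eq_norm]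

theorem add_inv_norm_smul_mem_sphere (c : E) {w : E} (hw : w ≠ 0) :
    c + ‖w‖⁻¹ • w ∈ sphere c 1 := by
  rw [mem_sphere_iff_norm, add_sub_cancel_left]
  exact norm_smul_inv_norm hw

theorem add_inv_norm_smul_mem_closedBall {c q y₁ y₂ w : E}
    (h₁ : y₁ ∈ sphere c 1 ∩ closedBall q 1) (h₂ : y₂ ∈ sphere c 1 ∩ closedBall q 1)
    {s t : ℝ} (hs : 0 ≤ s) (ht : 0 ≤ t) (hw : w = s • (y₁ - c) + t • (y₂ - c)) (hw0 : w ≠ 0) :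
    c + ‖w‖⁻¹ • w ∈ closedBall q 1 := by
  have hcap₁ := (mem_closedBall_iff_of_mem_sphere h₁.1).mp h₁.2
  have hcap₂ := (mem_closedBall_iff_of_mem_sphere h₂.1).mp h₂.2
  have hnorm : ‖w‖ ≤ s + t := by
    calc ‖w‖ ≤ ‖s • (y₁ - c)‖ + ‖t • (y₂ - c)‖ := hw ▸ norm_add_le _ _
      _ = s + t := by
        rw [norm_smul, norm_smul, mem_sphere_iff_norm.mp h₁.1, mem_sphere_iff_norm.mp h₂.1,
          Real.norm_of_nonneg hs, Real.norm_of_nonneg ht, mul_one, mul_one]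
  have hinner : ‖w‖ * ‖q - c‖ ^ 2 ≤ 2 * ⟪w, q - c⟫ := by
    calc ‖w‖ * ‖q - c‖ ^ 2 ≤ (s + t) * ‖q - c‖ ^ 2 := by gcongr
      _ ≤ 2 * ⟪w, q - c⟫ := by
        rw [hw, inner_add_left, real_inner_smul_left, real_inner_smul_left]
        linarith [mul_le_mul_of_nonneg_left hcap₁ hs, mul_le_mul_of_nonneg_left hcap₂ ht]
  rw [mem_closedBall_iff_of_mem_sphere (add_inv_norm_smul_mem_sphere c hw0), add_sub_cancel_left,
    real_inner_smul_left, mul_left_comm, le_inv_mul_iff₀ (norm_pos_iff.mpr hw0)]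
  exact hinner

end InnerProductSpace

theorem sphere_inter_frontier_eq_of_subset_closedBall {E : Type*} [NormedAddCommGroup E]
    [NormedSpace ℝ E] {P : Set E} {c : E} {r : ℝ} (hr : r ≠ 0) (hP : IsClosed P)
    (hPc : P ⊆ closedBall c r) : sphere c r ∩ frontier P = sphere c r ∩ P := by
  have hint : interior P ⊆ ball c r := interior_closedBall c hr ▸ interior_mono hPc
  ext p
  rw [mem_inter_iff, mem_inter_iff, hP.frontier_eq, mem_sdiff]
  refine ⟨fun ⟨hs, hp, _⟩ => ⟨hs, hp⟩, fun ⟨hs, hp⟩ => ⟨hs, hp, fun hi => ?_⟩⟩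
  exact (mem_ball.mp (hint hi)).ne (mem_sphere.mp hs)

theorem face_eq_sphere_inter_bpoly {f : ℕ} (x : Fin f → E3) (k : Fin f) :
    face x k = sphere (x k) 1 ∩ bpoly x :=
  sphere_inter_frontier_eq_of_subset_closedBall one_ne_zero
    (isClosed_iInter fun _ => isClosed_closedBall) (iInter_subset _ k)

theorem face_spherically_convex_general {f : ℕ} (x : Fin f → E3) (k : Fin f) :
    ∀ y₁ ∈ face x k, ∀ y₂ ∈ face x k, ∀ s t : ℝ, 0 ≤ s → 0 ≤ t →
      ∀ w : E3, w = s • (y₁ - x k) + t • (y₂ - x k) → w ≠ 0 →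
        x k + ‖w‖⁻¹ • w ∈ face x k := by
  intro y₁ hy₁ y₂ hy₂ s t hs ht w hw hw0
  rw [face_eq_sphere_inter_bpoly] at hy₁ hy₂ ⊢
  refine ⟨add_inv_norm_smul_mem_sphere _ hw0, mem_iInter.mpr fun j => ?_⟩
  exact add_inv_norm_smul_mem_closedBall ⟨hy₁.1, mem_iInter.mp hy₁.2 j⟩
    ⟨hy₂.1, mem_iInter.mp hy₂.2 j⟩ hs ht hw hw0

/-- Each face `F_k = S(x_k) ∩ bd(P)` of an intersection of unit balls with nonempty interior
and pairwise distinct centers is a spherically convex subset of the unit sphere `S(x_k)`. -/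
theorem face_spherically_convex {f : ℕ} (hf : 2 ≤ f) (x : Fin f → E3)
    (hint : (interior (bpoly x)).Nonempty)
    (hne : ∀ i k : Fin f, i ≠ k → x i ≠ x k) (k : Fin f) :
    ∀ y₁ ∈ face x k, ∀ y₂ ∈ face x k, ∀ s t : ℝ, 0 ≤ s → 0 ≤ t →
      ∀ w : E3, w = s • (y₁ - x k) + t • (y₂ - x k) → w ≠ 0 →
        x k + ‖w‖⁻¹ • w ∈ face x k :=
  face_spherically_convex_general x k
end
end

section
/- Let C = {c_1, …, c_n} ⊂ E³ be a finite set. The farthest-point Voronoi tiling of C has at least one vertex if and only if the points of C do not all lie in a common plane (i.e., the affine span of C is all of E³). -/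
open Set Metric MeasureTheory
open scoped RealInnerProductSpace

noncomputable section

/-! A farthest-point Voronoi cell is the polyhedron
`{x | ∀ j, ⟪c i - c j, x⟫ ≤ (‖c i‖² - ‖c j‖²) / 2}`, whose constraint normals span
`vectorSpan ℝ (range c)`. A nonempty polyhedron has an extreme point iff its normals span the
space. If they do not, the polyhedron contains a line through each of its points. If they do, a
point at which the normals of the tight constraints span is extreme, and from any other point one
can move orthogonally to those normals until a new constraint becomes tight, which raises the rank
of the tight normals. -/

section Polyhedron

open Submodule

variable {E : Type*} [NormedAddCommGroup E] [InnerProductSpace ℝ E] {ι : Type*}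

theorem span_eq_top_iff_forall_inner_eq_zero [FiniteDimensional ℝ E] {s : Set E} :
    span ℝ s = ⊤ ↔ ∀ v : E, (∀ w ∈ s, ⟪w, v⟫ = 0) → v = 0 := by
  rw [← orthogonal_eq_bot_iff, eq_bot_iff]
  refine forall_congr' fun v => imp_congr_left ?_
  refine ⟨fun h w hw => inner_right_of_mem_orthogonal (subset_span hw) h, fun h => ?_⟩
  have hle : span ℝ s ≤ (ℝ ∙ v)ᗮ :=
    span_le.2 fun w hw => mem_orthogonal_singleton_iff_inner_left.2 (h w hw)
  exact (mem_orthogonal _ v).2 fun u hu => mem_orthogonal_singleton_iff_inner_left.1 (hle hu)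

def polyhedron (a : ι → E) (b : ι → ℝ) : Set E := {x | ∀ j, ⟪a j, x⟫ ≤ b j}

def activeSpan (a : ι → E) (b : ι → ℝ) (x : E) : Submodule ℝ E :=
  span ℝ (a '' {j | ⟪a j, x⟫ = b j})

variable {a : ι → E} {b : ι → ℝ}

theorem mem_extremePoints_polyhedron_of_activeSpan_eq_top [FiniteDimensional ℝ E] {x : E}
    (hx : x ∈ polyhedron a b) (hact : activeSpan a b x = ⊤) :
    x ∈ (polyhedron a b).extremePoints ℝ := by
  refine mem_extremePoints_iff_left.2 ⟨hx, fun y hy z hz ⟨s, t, hs, ht, hst, hxyz⟩ => ?_⟩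
  have htight : ∀ j, ⟪a j, x⟫ = b j → ⟪a j, y - x⟫ = 0 := by
    intro j hj
    have hcomb : s * ⟪a j, y⟫ + t * ⟪a j, z⟫ = b j := by
      rw [← hj, ← hxyz, inner_add_right, real_inner_smul_right, real_inner_smul_right]
    have hyj : b j ≤ ⟪a j, y⟫ := by
      by_contra! hlt
      have hsplit : s * b j + t * b j = b j := by rw [← add_mul, hst, one_mul]
      linarith [mul_lt_mul_of_pos_left hlt hs, mul_le_mul_of_nonneg_left (hz j) ht.le]
    rw [inner_sub_right, hj, le_antisymm (hy j) hyj, sub_self]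
  refine sub_eq_zero.1 (span_eq_top_iff_forall_inner_eq_zero.1 hact (y - x) ?_)
  rintro _ ⟨j, hj, rfl⟩
  exact htight j hj

theorem exists_activeSpan_lt [Finite ι] [FiniteDimensional ℝ E] (hspan : span ℝ (range a) = ⊤)
    {x : E} (hx : x ∈ polyhedron a b) (hact : activeSpan a b x ≠ ⊤) :
    ∃ y ∈ polyhedron a b, activeSpan a b x < activeSpan a b y := by
  obtain ⟨w, hw, hw0⟩ := (Submodule.ne_bot_iff _).1 (orthogonal_eq_bot_iff.not.2 hact)
  obtain ⟨k, hk⟩ : ∃ k, ⟪a k, w⟫ ≠ 0 := by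
    by_contra! h
    exact hw0 (span_eq_top_iff_forall_inner_eq_zero.1 hspan w (by rintro _ ⟨j, rfl⟩; exact h j))
  -- Walk from `x` orthogonally to the active normals until a new constraint becomes tight.
  obtain ⟨v, hv, j, hj⟩ : ∃ v ∈ (activeSpan a b x)ᗮ, ∃ j, 0 < ⟪a j, v⟫ := by
    rcases hk.lt_or_gt with hk | hk
    · exact ⟨-w, neg_mem hw, k, by rwa [inner_neg_right, neg_pos]⟩
    · exact ⟨w, hw, k, hk⟩
  let step : ι → ℝ := fun j => (b j - ⟪a j, x⟫) / ⟪a j, v⟫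
  obtain ⟨j₀, hj₀ : 0 < ⟪a j₀, v⟫, hmin⟩ :=
    Set.exists_min_image {j | 0 < ⟪a j, v⟫} step (Set.toFinite _) ⟨j, hj⟩
  have hstep : 0 ≤ step j₀ := div_nonneg (sub_nonneg.2 (hx j₀)) hj₀.le
  have hinner : ∀ j, ⟪a j, x + step j₀ • v⟫ = ⟪a j, x⟫ + step j₀ * ⟪a j, v⟫ := fun j => by
    rw [inner_add_right, real_inner_smul_right]
  refine ⟨x + step j₀ • v, fun j => ?_, lt_of_le_of_ne ?_ fun heq => ?_⟩
  · rw [hinner]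
    rcases le_or_gt ⟪a j, v⟫ 0 with hjv | hjv
    · linarith [hx j, mul_nonpos_of_nonneg_of_nonpos hstep hjv]
    · have := (le_div_iff₀ hjv).1 (hmin j hjv)
      linarith
  · refine span_mono (Set.image_mono fun j (hj : ⟪a j, x⟫ = b j) => ?_)
    have : ⟪a j, v⟫ = 0 := inner_right_of_mem_orthogonal (subset_span (mem_image_of_mem a hj)) hv
    simp only [Set.mem_ofPred_eq, hinner, this, mul_zero, add_zero, hj]
  · have hnew : a j₀ ∈ activeSpan a b (x + step j₀ • v) := by
      refine subset_span ⟨j₀, ?_, rfl⟩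
      simp only [Set.mem_ofPred_eq, hinner, step, div_mul_cancel₀ _ hj₀.ne']
      ring
    rw [← heq] at hnew
    exact hj₀.ne' (inner_right_of_mem_orthogonal hnew hv)

theorem extremePoints_polyhedron_nonempty [Finite ι] [FiniteDimensional ℝ E]
    (hspan : span ℝ (range a) = ⊤) (hne : (polyhedron a b).Nonempty) :
    ((polyhedron a b).extremePoints ℝ).Nonempty := by
  by_contra hnone
  have hrank : ∀ r : ℕ, ∃ x ∈ polyhedron a b, r ≤ Module.finrank ℝ (activeSpan a b x) := by
    intro r
    induction r with
    | zero => exact hne.imp fun x hx => ⟨hx, Nat.zero_le _⟩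
    | succ r ih =>
      obtain ⟨x, hx, hr⟩ := ih
      have hact : activeSpan a b x ≠ ⊤ := fun h =>
        hnone ⟨x, mem_extremePoints_polyhedron_of_activeSpan_eq_top hx h⟩
      obtain ⟨y, hy, hlt⟩ := exists_activeSpan_lt hspan hx hact
      exact ⟨y, hy, hr.trans_lt (finrank_lt_finrank_of_lt hlt)⟩
  obtain ⟨x, -, hx⟩ := hrank (Module.finrank ℝ E + 1)
  exact (finrank_le (activeSpan a b x)).not_gt (Nat.lt_of_succ_le hx)

theorem extremePoints_polyhedron_eq_empty [FiniteDimensional ℝ E]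
    (hspan : span ℝ (range a) ≠ ⊤) : (polyhedron a b).extremePoints ℝ = ∅ := by
  obtain ⟨v, hv, hv0⟩ : ∃ v : E, (∀ j, ⟪a j, v⟫ = 0) ∧ v ≠ 0 := by
    simpa [span_eq_top_iff_forall_inner_eq_zero] using hspan
  have hline : ∀ x ∈ polyhedron a b, ∀ t : ℝ, x + t • v ∈ polyhedron a b := fun x hx t j => by
    rw [inner_add_right, real_inner_smul_right, hv, mul_zero, add_zero]
    exact hx j
  refine Set.eq_empty_of_forall_notMem fun x hx => hv0 ?_
  have hmid : x ∈ openSegment ℝ (x + (1 : ℝ) • v) (x + (-1 : ℝ) • v) :=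
    ⟨1 / 2, 1 / 2, by norm_num, by norm_num, by norm_num, by module⟩
  have := (mem_extremePoints_iff_left.1 hx).2 _ (hline x hx.1 1) _ (hline x hx.1 (-1)) hmid
  simpa using this

theorem extremePoints_polyhedron_nonempty_iff [Finite ι] [FiniteDimensional ℝ E] :
    ((polyhedron a b).extremePoints ℝ).Nonempty ↔
      (polyhedron a b).Nonempty ∧ span ℝ (range a) = ⊤ := by
  refine ⟨fun h => ⟨h.mono extremePoints_subset, ?_⟩,
    fun h => extremePoints_polyhedron_nonempty h.2 h.1⟩
  by_contra hspan
  simp [extremePoints_polyhedron_eq_empty hspan] at h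

end Polyhedron

theorem isVorVertex_iff {n : ℕ} (c : Fin n → E3) (p : E3) :
    IsVorVertex c p ↔ ∃ i, p ∈ (vorCell c i).extremePoints ℝ := by
  simp [IsVorVertex, IsFaceOfDim]

theorem vorCell_eq_polyhedron {n : ℕ} (c : Fin n → E3) (i : Fin n) :
    vorCell c i = polyhedron (fun j => c i - c j) (fun j => (‖c i‖ ^ 2 - ‖c j‖ ^ 2) / 2) := by
  ext p
  refine forall_congr' fun j => ?_
  rw [dist_eq_norm, dist_eq_norm, ← sq_le_sq₀ (norm_nonneg _) (norm_nonneg _),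
    norm_sub_sq_real, norm_sub_sq_real, inner_sub_left, real_inner_comm p, real_inner_comm p]
  constructor <;> intro h <;> linarith

theorem span_range_sub_eq_vectorSpan {k ι V : Type*} [Ring k] [AddCommGroup V] [Module k V]
    (c : ι → V) (i : ι) : Submodule.span k (range fun j => c i - c j) = vectorSpan k (range c) := by
  rw [vectorSpan_eq_span_vsub_set_left k (mem_range_self i), ← range_comp]
  rfl

theorem exists_vorCell_nonempty {n : ℕ} [Nonempty (Fin n)] (c : Fin n → E3) :
    ∃ i, (vorCell c i).Nonempty := by
  obtain ⟨i, hi⟩ := Finite.exists_max fun j => dist (0 : E3) (c j)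
  exact ⟨i, 0, hi⟩

/-- The farthest-point Voronoi tiling of a finite point set in `E3` has at least one vertex
if and only if the points do not all lie in a common plane, i.e. their affine span is all
of `E3`. -/
theorem voronoi_has_vertex_iff_affineSpan_top {n : ℕ} (c : Fin n → E3) :
    (∃ p : E3, IsVorVertex c p) ↔ affineSpan ℝ (Set.range c) = ⊤ := by
  calc (∃ p, IsVorVertex c p) ↔ ∃ i, ((vorCell c i).extremePoints ℝ).Nonempty := by
        simp only [isVorVertex_iff]; exact exists_comm
    _ ↔ ∃ i, (vorCell c i).Nonempty ∧ vectorSpan ℝ (range c) = ⊤ := by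
        simp only [vorCell_eq_polyhedron, extremePoints_polyhedron_nonempty_iff,
          span_range_sub_eq_vectorSpan]
    _ ↔ affineSpan ℝ (range c) = ⊤ := by
      constructor
      · rintro ⟨i, -, hspan⟩
        exact (AffineSubspace.affineSpan_eq_top_iff_vectorSpan_eq_top_of_nonempty ℝ E3 E3
          (range_nonempty_iff_nonempty.2 ⟨i⟩)).2 hspan
      · intro htop
        obtain ⟨-, i, -⟩ := AffineSubspace.nonempty_of_affineSpan_eq_top ℝ E3 E3 htop
        have : Nonempty (Fin n) := ⟨i⟩
        obtain ⟨j, hj⟩ := exists_vorCell_nonempty c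
        exact ⟨j, hj, AffineSubspace.vectorSpan_eq_top_of_affineSpan_eq_top ℝ E3 E3 htop⟩
end
end
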